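/- For any positive integers q ≥ 3 and l₁,…,l_q, the quantity (x^{l₁}∂^{l₁} − (γL)^{l₁})⋯(x^{l_q}∂^{l_q} − (γL)^{l_q}) exp(γL(x−1))|_{x=1} is O(L^{l₁+⋯+l_q − 2}) as L → ∞; for q = 2 it is O(L^{l₁+l₂−1}). -/

import Mathlib

open Filter

/-- The operator `x^l ∂^l − c^l` acting on smooth functions of one real variable. -/
noncomputable def factOp (l : ℕ) (c : ℝ) (f : ℝ → ℝ) : ℝ → ℝ :=
  fun x => x ^ l * (deriv^[l] f) x - c ^ l * f x

/-- The composition `(x^{l₁}∂^{l₁} − c^{l₁})⋯(x^{l_q}∂^{l_q} − c^{l_q})` for the list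
of exponents `ls = [l₁, …, l_q]`. -/
noncomputable def factProd (c : ℝ) : List ℕ → (ℝ → ℝ) → (ℝ → ℝ)
  | [], f => f
  | l :: ls, f => factOp l c (factProd c ls f)

/-!
Write every iterate as `P(x - 1, c) e^{c(x - 1)}` with `P ∈ ℝ[c][t]`, and give `t` weight `-1`
and `c` weight `1`. Differentiation (`P ↦ ∂ₜP + cP`) raises the weight by one, so the factor
`x^l ∂^l − c^l` raises it by at most `l`. Its top-weight part is `(∂ₜ + c)^l − c^l`, which kills
top-weight terms that do not depend on `t`. So the first factor, applied to `1`, saves one unit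
of weight and leaves a top-weight part linear in `t`; after the second factor the top-weight
part no longer depends on `t`, and the third factor saves a second unit. At `x = 1` only the
`t⁰` coefficient survives: a polynomial in `c = γL` of degree at most the weight.
-/

open Polynomial

namespace ExpPoly

section

variable {R : Type*} [CommRing R]

/-- For `P ∈ R[c][t]` (outer variable `t`): every monomial `t^b c^i` of `P` has `i - b ≤ w`. -/
noncomputable def weightLE (w : ℕ) : Submodule R R[X][X] where
  carrier := {P | ∀ b, P.coeff b ∈ degreeLE R ↑(w + b)}
  zero_mem' _ := by simp
  add_mem' hP hQ b := by rw [coeff_add]; exact add_mem (hP b) (hQ b)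
  smul_mem' r _ hP b := by rw [coeff_smul]; exact Submodule.smul_mem _ r (hP b)

variable {P Q : R[X][X]} {v w : ℕ}

theorem mem_weightLE : P ∈ weightLE w ↔ ∀ b, (P.coeff b).degree ≤ ↑(w + b) := by
  simp [weightLE, mem_degreeLE]

theorem weightLE_mono (h : v ≤ w) : weightLE (R := R) v ≤ weightLE w :=
  fun _ hP b => degreeLE_mono (by exact_mod_cast Nat.add_le_add_right h b) (hP b)

theorem C_mem_weightLE {p : R[X]} (hp : p.degree ≤ w) : C p ∈ weightLE w := by
  rw [mem_weightLE]
  intro b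
  rw [coeff_C]
  split_ifs
  · exact hp.trans (by exact_mod_cast Nat.le_add_right w b)
  · simp

theorem map_C_mem_weightLE (p : R[X]) : p.map C ∈ weightLE 0 := by
  rw [mem_weightLE]
  intro b
  rw [coeff_map]
  exact degree_C_le.trans (by exact_mod_cast Nat.zero_le _)

theorem X_add_one_pow_mem_weightLE (l : ℕ) : (X + 1 : R[X][X]) ^ l ∈ weightLE 0 := by
  convert map_C_mem_weightLE ((X + 1 : R[X]) ^ l)
  simp

theorem mul_mem_weightLE (hP : P ∈ weightLE v) (hQ : Q ∈ weightLE w) :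
    P * Q ∈ weightLE (v + w) := by
  rw [mem_weightLE] at *
  intro b
  rw [coeff_mul]
  refine (degree_sum_le _ _).trans (Finset.sup_le fun x hx => ?_)
  have hb : x.1 + x.2 = b := Finset.HasAntidiagonal.mem_antidiagonal.mp hx
  calc (P.coeff x.1 * Q.coeff x.2).degree
      ≤ (P.coeff x.1).degree + (Q.coeff x.2).degree := degree_mul_le _ _
    _ ≤ ↑(v + x.1) + ↑(w + x.2) := add_le_add (hP x.1) (hQ x.2)
    _ = ↑(v + w + b) := by rw [← hb]; norm_cast; ring

theorem C_X_pow_mem_weightLE (l : ℕ) : (C X : R[X][X]) ^ l ∈ weightLE l := by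
  rw [← C_pow]
  exact C_mem_weightLE (degree_X_pow_le l)

theorem C_X_mem_weightLE : (C X : R[X][X]) ∈ weightLE 1 :=
  C_mem_weightLE degree_X_le

theorem derivative_mem_weightLE (hP : P ∈ weightLE w) : derivative P ∈ weightLE (w + 1) := by
  intro b
  rw [coeff_derivative, ← Nat.cast_succ, mul_comm, ← nsmul_eq_mul]
  exact nsmul_mem (by simpa only [Nat.add_right_comm, Nat.add_assoc] using hP (b + 1)) _

theorem X_mul_mem_weightLE (hP : P ∈ weightLE (w + 1)) : X * P ∈ weightLE w := by
  rintro (_ | b)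
  · simp
  · rw [coeff_X_mul]
    simpa only [Nat.add_right_comm, Nat.add_assoc] using hP b

theorem X_add_one_pow_sub_one_mul_mem_weightLE (hP : P ∈ weightLE (w + 1)) (l : ℕ) :
    ((X + 1) ^ l - 1) * P ∈ weightLE w := by
  rw [← mul_geom_sum, add_sub_cancel_right, mul_assoc]
  refine X_mul_mem_weightLE ?_
  simpa using mul_mem_weightLE
    (Submodule.sum_mem _ fun i _ => X_add_one_pow_mem_weightLE (R := R) i) hP

noncomputable def derivExp (P : R[X][X]) : R[X][X] := derivative P + C X * P

noncomputable def factOpPoly (l : ℕ) (P : R[X][X]) : R[X][X] :=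
  (X + 1) ^ l * derivExp^[l] P - C X ^ l * P

noncomputable def factProdPoly : List ℕ → R[X][X]
  | [] => 1
  | l :: ls => factOpPoly l (factProdPoly ls)

theorem derivExp_mem_weightLE (hP : P ∈ weightLE w) : derivExp P ∈ weightLE (w + 1) :=
  add_mem (derivative_mem_weightLE hP)
    (weightLE_mono (by omega) (mul_mem_weightLE C_X_mem_weightLE hP))

theorem derivExp_iterate_mem_weightLE (hP : P ∈ weightLE w) (l : ℕ) :
    derivExp^[l] P ∈ weightLE (w + l) := by
  induction l with
  | zero => exact hP
  | succ l ih => rw [Function.iterate_succ_apply']; exact derivExp_mem_weightLE ih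

theorem commute_derivative_derivExp :
    Function.Commute (derivative : R[X][X] → R[X][X]) derivExp := fun P => by
  simp [derivExp]

theorem derivExp_iterate_one (l : ℕ) : derivExp^[l] (1 : R[X][X]) = C X ^ l := by
  induction l with
  | zero => rfl
  | succ l ih =>
    rw [Function.iterate_succ_apply', ih, derivExp, ← C_pow, derivative_C, zero_add, C_pow,
      pow_succ']

theorem factOpPoly_mem_weightLE (hP : P ∈ weightLE w) (l : ℕ) :
    factOpPoly l P ∈ weightLE (w + l) := by
  refine sub_mem ?_ (weightLE_mono (by omega) (mul_mem_weightLE (C_X_pow_mem_weightLE l) hP))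
  simpa using mul_mem_weightLE (X_add_one_pow_mem_weightLE l) (derivExp_iterate_mem_weightLE hP l)

theorem derivExp_iterate_sub_mem_weightLE (hP : derivative P ∈ weightLE w) (l : ℕ) :
    derivExp^[l + 1] P - C X ^ (l + 1) * P ∈ weightLE (w + l) := by
  induction l with
  | zero => simpa [derivExp] using hP
  | succ l ih =>
    have h : derivExp^[l + 2] P - C X ^ (l + 2) * P =
        derivExp (derivExp^[l + 1] P - C X ^ (l + 1) * P) + C X ^ (l + 1) * derivative P := by
      rw [Function.iterate_succ_apply' _ (l + 1)]
      simp only [derivExp, derivative_sub, derivative_mul, derivative_pow, derivative_C, mul_zero]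
      ring
    rw [h]
    exact add_mem (derivExp_mem_weightLE ih)
      (weightLE_mono (by omega) (mul_mem_weightLE (C_X_pow_mem_weightLE _) hP))

/-- The hypothesis `hP'` says that the top-weight part of `P` does not depend on `t`. -/
theorem factOpPoly_mem_weightLE_of_derivative (hP : P ∈ weightLE w)
    (hP' : derivative P ∈ weightLE w) (l : ℕ) : factOpPoly (l + 1) P ∈ weightLE (w + l) := by
  have h : factOpPoly (l + 1) P = (X + 1) ^ (l + 1) * (derivExp^[l + 1] P - C X ^ (l + 1) * P)
      + ((X + 1) ^ (l + 1) - 1) * (C X ^ (l + 1) * P) := by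
    rw [factOpPoly]; ring
  rw [h]
  refine add_mem ?_ (X_add_one_pow_sub_one_mul_mem_weightLE ?_ _)
  · simpa using mul_mem_weightLE (X_add_one_pow_mem_weightLE _)
      (derivExp_iterate_sub_mem_weightLE hP' l)
  · exact weightLE_mono (by omega) (mul_mem_weightLE (C_X_pow_mem_weightLE _) hP)

theorem derivative_factOpPoly (P : R[X][X]) (l : ℕ) :
    derivative (factOpPoly (l + 1) P) =
      (l + 1) • ((X + 1) ^ l * derivExp^[l + 1] P) + factOpPoly (l + 1) (derivative P) := by
  simp only [factOpPoly, derivative_sub, derivative_mul, derivative_pow, derivative_C,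
    derivative_add, derivative_X, derivative_one, map_natCast, add_tsub_cancel_right,
    (commute_derivative_derivExp.iterate_right (l + 1)).eq, nsmul_eq_mul]
  ring

/-- The hypothesis `hP''` says that the top-weight part of `P` is at most linear in `t`. -/
theorem derivative_factOpPoly_mem_weightLE (hP : P ∈ weightLE w)
    (hP'' : derivative (derivative P) ∈ weightLE (w + 1)) (l : ℕ) :
    derivative (factOpPoly (l + 1) P) ∈ weightLE (w + l + 1) := by
  rw [derivative_factOpPoly]
  refine add_mem (nsmul_mem ?_ _) ?_
  · simpa [Nat.add_assoc] using mul_mem_weightLE (X_add_one_pow_mem_weightLE l)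
      (derivExp_iterate_mem_weightLE hP (l + 1))
  · exact weightLE_mono (by omega)
      (factOpPoly_mem_weightLE_of_derivative (derivative_mem_weightLE hP) hP'' l)

theorem one_mem_weightLE : (1 : R[X][X]) ∈ weightLE 0 := by
  simpa using C_mem_weightLE (R := R) (p := 1) (w := 0) degree_one_le

theorem factOpPoly_one (l : ℕ) :
    factOpPoly l (1 : R[X][X]) = C X ^ l * ((X + 1 : R[X]) ^ l - 1).map C := by
  simp only [factOpPoly, derivExp_iterate_one, mul_one, Polynomial.map_sub, Polynomial.map_pow,
    Polynomial.map_add, map_X, Polynomial.map_one]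
  ring

theorem factProdPoly_singleton (l : ℕ) :
    factProdPoly [l + 1] ∈ weightLE (R := R) l ∧
      derivative (derivative (factProdPoly [l + 1])) ∈ weightLE (R := R) (l + 1) := by
  constructor
  · simpa [factProdPoly] using factOpPoly_mem_weightLE_of_derivative one_mem_weightLE
      (by simp) l
  · rw [factProdPoly, factProdPoly, factOpPoly_one, ← C_pow, derivative_C_mul, derivative_C_mul,
      derivative_map, derivative_map]
    exact mul_mem_weightLE (w := 0) (C_mem_weightLE (degree_X_pow_le _)) (map_C_mem_weightLE _)

theorem factProdPoly_mem_weightLE_of_length_eq_two {ls : List ℕ} (hls : ∀ l ∈ ls, 1 ≤ l)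
    (h : ls.length = 2) :
    factProdPoly ls ∈ weightLE (R := R) (ls.sum - 1) ∧
      derivative (factProdPoly ls) ∈ weightLE (R := R) (ls.sum - 1) := by
  obtain ⟨a, b, rfl⟩ := List.length_eq_two.mp h
  obtain ⟨a, rfl⟩ := Nat.exists_eq_add_of_le' (hls a (by simp))
  obtain ⟨b, rfl⟩ := Nat.exists_eq_add_of_le' (hls b (by simp))
  obtain ⟨hQ, hQ''⟩ := factProdPoly_singleton (R := R) b
  refine ⟨weightLE_mono ?_ (factOpPoly_mem_weightLE hQ (a + 1)),
    weightLE_mono ?_ (derivative_factOpPoly_mem_weightLE hQ hQ'' a)⟩ <;>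
    simp only [List.sum_cons, List.sum_nil] <;> omega

theorem factProdPoly_mem_weightLE_of_three_le_length {ls : List ℕ} (hls : ∀ l ∈ ls, 1 ≤ l)
    (h : 3 ≤ ls.length) : factProdPoly ls ∈ weightLE (R := R) (ls.sum - 2) := by
  induction ls with
  | nil => simp at h
  | cons l ls ih =>
    have hls' : ∀ l ∈ ls, 1 ≤ l := fun l hl => hls l (List.mem_cons_of_mem _ hl)
    have hsum := List.length_le_sum_of_one_le ls hls'
    obtain ⟨l, rfl⟩ := Nat.exists_eq_add_of_le' (hls l List.mem_cons_self)
    rcases (by simpa using h : 2 ≤ ls.length).eq_or_lt with h2 | h3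
    · obtain ⟨hQ, hQ'⟩ := factProdPoly_mem_weightLE_of_length_eq_two (R := R) hls' h2.symm
      exact weightLE_mono (by simp only [List.sum_cons]; omega) (factOpPoly_mem_weightLE_of_derivative hQ hQ' l)
    · exact weightLE_mono (by simp only [List.sum_cons]; omega) (factOpPoly_mem_weightLE (ih hls' h3) (l + 1))

end

noncomputable def expPolyFun (P : ℝ[X][X]) (c x : ℝ) : ℝ :=
  P.evalEval c (x - 1) * Real.exp (c * (x - 1))

theorem hasDerivAt_expPolyFun (P : ℝ[X][X]) (c x : ℝ) :
    HasDerivAt (expPolyFun P c) (expPolyFun (derivExp P) c x) x := by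
  have hP : HasDerivAt (fun y => P.evalEval c (y - 1)) ((derivative P).evalEval c (x - 1)) x := by
    simpa only [derivative_map, map_evalRingHom_eval] using
      ((P.map (evalRingHom c)).hasDerivAt (x - 1)).comp_sub_const x 1
  have hexp : HasDerivAt (fun y => Real.exp (c * (y - 1))) (Real.exp (c * (x - 1)) * c) x := by
    simpa [mul_comm] using (((hasDerivAt_id x).sub_const 1).const_mul c).exp
  refine (hP.mul hexp).congr_deriv ?_
  simp only [expPolyFun, derivExp, evalEval_add, evalEval_mul, evalEval_C, eval_X]
  ring

theorem deriv_iterate_expPolyFun (P : ℝ[X][X]) (c : ℝ) (l : ℕ) :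
    deriv^[l] (expPolyFun P c) = expPolyFun (derivExp^[l] P) c := by
  induction l generalizing P with
  | zero => rfl
  | succ l ih =>
    rw [Function.iterate_succ_apply, Function.iterate_succ_apply, ← ih]
    exact congrArg _ (funext fun x => (hasDerivAt_expPolyFun P c x).deriv)

theorem factOp_expPolyFun (l : ℕ) (c : ℝ) (P : ℝ[X][X]) :
    factOp l c (expPolyFun P c) = expPolyFun (factOpPoly l P) c := by
  ext x
  simp only [factOp, deriv_iterate_expPolyFun, expPolyFun, factOpPoly, evalEval_sub, evalEval_mul,
    evalEval_pow, evalEval_add, evalEval_X, evalEval_one, evalEval_C, eval_X, sub_add_cancel]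
  ring

theorem factProd_exp (c : ℝ) (ls : List ℕ) :
    factProd c ls (fun x => Real.exp (c * (x - 1))) = expPolyFun (factProdPoly ls) c := by
  induction ls with
  | nil => ext x; simp [factProd, factProdPoly, expPolyFun]
  | cons l ls ih => rw [factProd, ih, factOp_expPolyFun, factProdPoly]

theorem expPolyFun_one (P : ℝ[X][X]) (c : ℝ) : expPolyFun P c 1 = (P.coeff 0).eval c := by
  simp [expPolyFun, evalEval, coeff_zero_eq_eval_zero]

theorem isBigO_eval_const_mul_atTop {p : ℝ[X]} {n : ℕ} (hp : p.degree ≤ n) (γ : ℝ) :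
    (fun L => p.eval (γ * L)) =O[atTop] fun L => L ^ n := by
  have hdeg : (p.comp (C γ * X)).degree ≤ (X ^ n : ℝ[X]).degree := by
    rw [degree_X_pow]
    refine degree_le_of_natDegree_le (natDegree_comp_le.trans ?_)
    calc p.natDegree * (C γ * X).natDegree ≤ n * 1 :=
          Nat.mul_le_mul (natDegree_le_of_degree_le hp)
            ((natDegree_C_mul_le γ X).trans natDegree_X_le)
      _ = n := mul_one n
  simpa using isBigO_atTop_of_degree_le _ _ hdeg

theorem isBigO_factProd_of_mem_weightLE {ls : List ℕ} {w : ℕ}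
    (hw : factProdPoly ls ∈ weightLE (R := ℝ) w) (γ : ℝ) :
    (fun L : ℝ => factProd (γ * L) ls (fun x => Real.exp (γ * L * (x - 1))) 1)
      =O[atTop] fun L : ℝ => L ^ w := by
  simp only [factProd_exp, expPolyFun_one]
  exact isBigO_eval_const_mul_atTop (by simpa using mem_weightLE.mp hw 0) γ

end ExpPoly

theorem statement14 (γ : ℝ) (ls : List ℕ) (hls : ∀ l ∈ ls, 1 ≤ l) :
    (ls.length = 2 →
      (fun L : ℝ => factProd (γ * L) ls (fun x => Real.exp (γ * L * (x - 1))) 1)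
        =O[atTop] fun L : ℝ => L ^ (ls.sum - 1)) ∧
    (3 ≤ ls.length →
      (fun L : ℝ => factProd (γ * L) ls (fun x => Real.exp (γ * L * (x - 1))) 1)
        =O[atTop] fun L : ℝ => L ^ (ls.sum - 2)) :=
  ⟨fun h2 => ExpPoly.isBigO_factProd_of_mem_weightLE
      (ExpPoly.factProdPoly_mem_weightLE_of_length_eq_two hls h2).1 γ,
    fun h3 => ExpPoly.isBigO_factProd_of_mem_weightLE
      (ExpPoly.factProdPoly_mem_weightLE_of_three_le_length hls h3) γ⟩
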